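/- arXiv:1505.03125 — 2 statements merged into one kernel-verified Lean document; each statement's English description precedes it below -/
import Mathlib

section
/- Let M be a diagonal positive-definite n×n matrix and suppose Q_x = S + (1/2)E with S antisymmetric and E symmetric. For the semi-discrete ODE du/dt = -M⁻¹ Q u + σ M⁻¹ E₋ u, where E = E₊ + E₋ with E₊ positive semi-definite and E₋ negative semi-definite, the energy uᵀ M u satisfies d(uᵀMu)/dt = -uᵀE₊u + (2σ-1)uᵀE₋u, which is ≤ 0 whenever σ ≥ 1/2. -/
/-!
Differentiating the energy `uᵀ M u` and using `Mᵀ = M` gives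
`d/dt (uᵀ M u) = 2 uᵀ M u' = -2 uᵀ Q u + 2σ uᵀ E₋ u`.
The skew part `S` of `Q` contributes nothing to a quadratic form, so `2 uᵀ Q u = uᵀ E u`,
and splitting `E = E₊ + E₋` yields the rate `-uᵀ E₊ u + (2σ - 1) uᵀ E₋ u`, a sum of two
nonpositive terms once `σ ≥ 1/2`.
-/

open Matrix

namespace Matrix

variable {ι R : Type*} [Fintype ι]

theorem dotProduct_transpose_mulVec_self [CommSemiring R] (A : Matrix ι ι R) (v : ι → R) :
    v ⬝ᵥ (Aᵀ *ᵥ v) = v ⬝ᵥ (A *ᵥ v) := by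
  rw [mulVec_transpose, dotProduct_comm, dotProduct_mulVec]

theorem dotProduct_mulVec_comm_of_transpose_eq [CommSemiring R] {A : Matrix ι ι R}
    (hA : Aᵀ = A) (v w : ι → R) : w ⬝ᵥ (A *ᵥ v) = v ⬝ᵥ (A *ᵥ w) := by
  rw [dotProduct_mulVec, ← mulVec_transpose, hA, dotProduct_comm]

theorem dotProduct_mulVec_self_eq_zero_of_transpose_eq_neg [CommRing R] [IsAddTorsionFree R]
    {S : Matrix ι ι R} (hS : Sᵀ = -S) (v : ι → R) : v ⬝ᵥ (S *ᵥ v) = 0 := by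
  have h := dotProduct_transpose_mulVec_self S v
  rw [hS, neg_mulVec, dotProduct_neg] at h
  exact self_eq_neg.mp h.symm

theorem hasDerivAt_dotProduct_mulVec (A : Matrix ι ι ℝ) {u : ℝ → ι → ℝ} {u' : ι → ℝ} {t : ℝ}
    (hu : ∀ i, HasDerivAt (fun s => u s i) (u' i) t) :
    HasDerivAt (fun s => u s ⬝ᵥ (A *ᵥ u s)) (u' ⬝ᵥ (A *ᵥ u t) + u t ⬝ᵥ (A *ᵥ u')) t := by
  have hAu : ∀ i, HasDerivAt (fun s => (A *ᵥ u s) i) ((A *ᵥ u') i) t := fun i => by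
    simp only [mulVec, dotProduct]
    exact HasDerivAt.fun_sum fun j _ => (hu j).const_mul (A i j)
  simp only [dotProduct, ← Finset.sum_add_distrib]
  exact HasDerivAt.fun_sum fun i _ => (hu i).mul (hAu i)

end Matrix

variable {ι : Type*} [Fintype ι]

theorem sbp_sat_energy_rate {M Q S E Eplus Eminus : Matrix ι ι ℝ} (hM : Mᵀ = M) (hS : Sᵀ = -S)
    (hQ : Q = S + (1/2 : ℝ) • E) (hsplit : E = Eplus + Eminus) (σ : ℝ) {v w : ι → ℝ}
    (hw : M *ᵥ w = -(Q *ᵥ v) + σ • (Eminus *ᵥ v)) :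
    w ⬝ᵥ (M *ᵥ v) + v ⬝ᵥ (M *ᵥ w)
      = -(v ⬝ᵥ (Eplus *ᵥ v)) + (2 * σ - 1) * (v ⬝ᵥ (Eminus *ᵥ v)) := by
  have hQv : v ⬝ᵥ (Q *ᵥ v) = (1/2 : ℝ) * (v ⬝ᵥ (Eplus *ᵥ v) + v ⬝ᵥ (Eminus *ᵥ v)) := by
    rw [hQ, hsplit, add_mulVec, dotProduct_add,
      dotProduct_mulVec_self_eq_zero_of_transpose_eq_neg hS, smul_mulVec, dotProduct_smul,
      add_mulVec, dotProduct_add, zero_add, smul_eq_mul]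
  rw [dotProduct_mulVec_comm_of_transpose_eq hM, hw, dotProduct_add, dotProduct_neg,
    dotProduct_smul, smul_eq_mul, hQv]
  ring

theorem energy_rate_nonpos {Eplus Eminus : Matrix ι ι ℝ} (hEplus : Eplus.PosSemidef)
    (hEminus : (-Eminus).PosSemidef) {σ : ℝ} (hσ : (1/2 : ℝ) ≤ σ) (v : ι → ℝ) :
    -(v ⬝ᵥ (Eplus *ᵥ v)) + (2 * σ - 1) * (v ⬝ᵥ (Eminus *ᵥ v)) ≤ 0 := by
  have hplus : 0 ≤ v ⬝ᵥ (Eplus *ᵥ v) := by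
    simpa using hEplus.dotProduct_mulVec_nonneg v
  have hminus : v ⬝ᵥ (Eminus *ᵥ v) ≤ 0 := by
    simpa only [star_trivial, neg_mulVec, dotProduct_neg, neg_nonneg]
      using hEminus.dotProduct_mulVec_nonneg v
  have hpenalty := mul_nonpos_of_nonneg_of_nonpos (by linarith : (0 : ℝ) ≤ 2 * σ - 1) hminus
  linarith

theorem sbp_sat_energy_estimate_general {n : ℕ}
    (M Q S E Eplus Eminus : Matrix (Fin n) (Fin n) ℝ)
    (d : Fin n → ℝ) (hMd : M = Matrix.diagonal d) (hdpos : ∀ i, 0 < d i)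
    (hS : Sᵀ = -S)
    (hQ : Q = S + (1/2 : ℝ) • E)
    (hsplit : E = Eplus + Eminus)
    (hEplus : Eplus.PosSemidef) (hEminus : (-Eminus).PosSemidef)
    (σ : ℝ) (hσ : (1/2 : ℝ) ≤ σ)
    (u u' : ℝ → Fin n → ℝ)
    (hderiv : ∀ t i, HasDerivAt (fun s => u s i) (u' t i) t)
    (hode : ∀ t, u' t = -((M⁻¹ * Q) *ᵥ u t) + σ • ((M⁻¹ * Eminus) *ᵥ u t)) :
    ∀ t : ℝ,
      HasDerivAt (fun s => u s ⬝ᵥ (M *ᵥ u s))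
        (-(u t ⬝ᵥ (Eplus *ᵥ u t)) + (2 * σ - 1) * (u t ⬝ᵥ (Eminus *ᵥ u t))) t ∧
      -(u t ⬝ᵥ (Eplus *ᵥ u t)) + (2 * σ - 1) * (u t ⬝ᵥ (Eminus *ᵥ u t)) ≤ 0 := by
  have hMsymm : Mᵀ = M := by rw [hMd, diagonal_transpose]
  have hMdet : IsUnit M.det := by
    rw [hMd, det_diagonal]
    exact isUnit_iff_ne_zero.2 (Finset.prod_ne_zero_iff.2 fun i _ => (hdpos i).ne')
  have hMcancel : ∀ (B : Matrix (Fin n) (Fin n) ℝ) v, M *ᵥ ((M⁻¹ * B) *ᵥ v) = B *ᵥ v := fun B v => by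
    rw [mulVec_mulVec, mul_nonsing_inv_cancel_left M B hMdet]
  intro t
  have hMu' : M *ᵥ u' t = -(Q *ᵥ u t) + σ • (Eminus *ᵥ u t) := by
    rw [hode t, mulVec_add, mulVec_neg, mulVec_smul, hMcancel, hMcancel]
  refine ⟨?_, energy_rate_nonpos hEplus hEminus hσ (u t)⟩
  rw [← sbp_sat_energy_rate hMsymm hS hQ hsplit σ hMu']
  exact hasDerivAt_dotProduct_mulVec M (hderiv t)

theorem sbp_sat_energy_estimate {n : ℕ}
    (M Q S E Eplus Eminus : Matrix (Fin n) (Fin n) ℝ)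
    (d : Fin n → ℝ) (hMd : M = Matrix.diagonal d) (hdpos : ∀ i, 0 < d i)
    (hS : Sᵀ = -S) (hE : Eᵀ = E)
    (hQ : Q = S + (1/2 : ℝ) • E)
    (hsplit : E = Eplus + Eminus)
    (hEplus : Eplus.PosSemidef) (hEminus : (-Eminus).PosSemidef)
    (σ : ℝ) (hσ : (1/2 : ℝ) ≤ σ)
    (u u' : ℝ → Fin n → ℝ)
    (hderiv : ∀ t i, HasDerivAt (fun s => u s i) (u' t i) t)
    (hode : ∀ t, u' t = -((M⁻¹ * Q) *ᵥ u t) + σ • ((M⁻¹ * Eminus) *ᵥ u t)) :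
    ∀ t : ℝ,
      HasDerivAt (fun s => u s ⬝ᵥ (M *ᵥ u s))
        (-(u t ⬝ᵥ (Eplus *ᵥ u t)) + (2 * σ - 1) * (u t ⬝ᵥ (Eminus *ᵥ u t))) t ∧
      -(u t ⬝ᵥ (Eplus *ᵥ u t)) + (2 * σ - 1) * (u t ⬝ᵥ (Eminus *ᵥ u t)) ≤ 0 :=
  sbp_sat_energy_estimate_general M Q S E Eplus Eminus d hMd hdpos hS hQ hsplit hEplus hEminus σ hσ
    u u' hderiv hode
end

section
/- If u solves du/dt = A u where M is symmetric positive-definite and M A + AᵀM = -P + (2σ-1)N with P positive semi-definite, N negative semi-definite, and σ ≥ 1/2, then t ↦ u(t)ᵀ M u(t) is non-increasing. -/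
/-! Along a solution, the derivative of `uᵀ M u` is the quadratic form of `M A + Aᵀ M = -P + (2σ - 1) N`
at `u`, which is nonpositive since `P ⪰ 0`, `N ⪯ 0` and `2σ - 1 ≥ 0`. -/

open Matrix

section

variable {ι : Type*} [Fintype ι]

theorem HasDerivAt.dotProduct {u v : ℝ → ι → ℝ} {u' v' : ι → ℝ} {t : ℝ}
    (hu : HasDerivAt u u' t) (hv : HasDerivAt v v' t) :
    HasDerivAt (fun s => u s ⬝ᵥ v s) (u' ⬝ᵥ v t + u t ⬝ᵥ v') t := by
  rw [hasDerivAt_pi] at hu hv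
  have h := HasDerivAt.fun_sum (u := Finset.univ) fun i _ => (hu i).fun_mul (hv i)
  rw [Finset.sum_add_distrib] at h
  exact h

theorem HasDerivAt.mulVec {m : Type*} [Fintype m] (M : Matrix m ι ℝ) {u : ℝ → ι → ℝ}
    {u' : ι → ℝ} {t : ℝ} (hu : HasDerivAt u u' t) :
    HasDerivAt (fun s => M *ᵥ u s) (M *ᵥ u') t :=
  M.mulVecLin.toContinuousLinearMap.hasFDerivAt.comp_hasDerivAt (x := t) hu

theorem dotProduct_mulVec_add_dotProduct_mulVec (A M : Matrix ι ι ℝ) (v : ι → ℝ) :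
    (A *ᵥ v) ⬝ᵥ (M *ᵥ v) + v ⬝ᵥ (M *ᵥ (A *ᵥ v)) = v ⬝ᵥ ((M * A + Aᵀ * M) *ᵥ v) := by
  rw [add_mulVec, dotProduct_add, ← mulVec_mulVec, ← mulVec_mulVec,
    ← vecMul_transpose, ← dotProduct_mulVec, add_comm]

theorem dotProduct_mulVec_nonpos {P N : Matrix ι ι ℝ}
    (hP : P.PosSemidef) (hN : (-N).PosSemidef) {c : ℝ} (hc : 0 ≤ c) (v : ι → ℝ) :
    v ⬝ᵥ ((-P + c • N) *ᵥ v) ≤ 0 := by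
  have hPv := hP.dotProduct_mulVec_nonneg v
  have hNv := hN.dotProduct_mulVec_nonneg v
  simp only [star_trivial, neg_mulVec, dotProduct_neg] at hPv hNv
  rw [add_mulVec, dotProduct_add, neg_mulVec, dotProduct_neg, smul_mulVec, dotProduct_smul,
    smul_eq_mul]
  nlinarith

end

theorem abstract_time_stability_general {n : ℕ}
    (A M P N : Matrix (Fin n) (Fin n) ℝ)
    (hP : P.PosSemidef) (hN : (-N).PosSemidef)
    (σ : ℝ) (hσ : (1/2 : ℝ) ≤ σ)
    (hcomp : M * A + Aᵀ * M = -P + (2 * σ - 1) • N)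
    (u : ℝ → Fin n → ℝ)
    (hderiv : ∀ t i, HasDerivAt (fun s => u s i) ((A *ᵥ u t) i) t) :
    Antitone (fun t => u t ⬝ᵥ (M *ᵥ u t)) := by
  have hu : ∀ t, HasDerivAt u (A *ᵥ u t) t := fun t => hasDerivAt_pi.mpr (hderiv t)
  refine antitone_of_hasDerivAt_nonpos (fun t => (hu t).dotProduct ((hu t).mulVec M)) fun t => ?_
  rw [dotProduct_mulVec_add_dotProduct_mulVec, hcomp]
  exact dotProduct_mulVec_nonpos hP hN (by linarith) (u t)

theorem abstract_time_stability {n : ℕ}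
    (A M P N : Matrix (Fin n) (Fin n) ℝ)
    (hM : M.PosDef)
    (hP : P.PosSemidef) (hN : (-N).PosSemidef)
    (σ : ℝ) (hσ : (1/2 : ℝ) ≤ σ)
    (hcomp : M * A + Aᵀ * M = -P + (2 * σ - 1) • N)
    (u : ℝ → Fin n → ℝ)
    (hderiv : ∀ t i, HasDerivAt (fun s => u s i) ((A *ᵥ u t) i) t) :
    Antitone (fun t => u t ⬝ᵥ (M *ᵥ u t)) :=
  abstract_time_stability_general A M P N hP hN σ hσ hcomp u hderiv
end
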